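/- arXiv:1602.04130 — 2 statements merged into one kernel-verified Lean document; each statement's English description precedes it below -/
import Mathlib

section
/- Let p be a prime and let K̄ be a non-trivial subgroup of the image D̄ of the diagonal torus in PSL(p,ℂ) which is stable under conjugation by M̄_c. If K̄ equals the cyclic group generated by D̄(ξ), then the centralizer in PSL(p,ℂ) of the group K̄ ⋊ ⟨M̄_c⟩ is ⟨D̄(ξ)⟩ × ⟨M̄_c⟩; otherwise the centralizer is ⟨D̄(ξ)⟩. -/
open Matrix

/-- `PSL(p, ℂ)` as the quotient of `SL(p, ℂ)` by its center. -/
abbrev PSL (p : ℕ) [Fact p.Prime] : Type :=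
  Matrix.SpecialLinearGroup (ZMod p) ℂ ⧸ Subgroup.center (Matrix.SpecialLinearGroup (ZMod p) ℂ)

/-- The natural projection `π : SL(p,ℂ) → PSL(p,ℂ)`. -/
abbrev projPSL (p : ℕ) [Fact p.Prime] :
    Matrix.SpecialLinearGroup (ZMod p) ℂ →* PSL p :=
  QuotientGroup.mk' _

/-- `D̄`, the image in `PSL(p,ℂ)` of the subgroup of diagonal matrices of `SL(p,ℂ)`. -/
noncomputable def DbarSub (p : ℕ) [Fact p.Prime] : Subgroup (PSL p) :=
  Subgroup.map (projPSL p)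
    (Subgroup.closure {x : Matrix.SpecialLinearGroup (ZMod p) ℂ |
      (x : Matrix (ZMod p) (ZMod p) ℂ).IsDiag})

/-!
A class in the centralizer commutes with `M̄_c`, so a lift `x` satisfies `x M_c = ω M_c x` for a
`p`-th root of unity `ω`. Since `D(ξ) M_c = ξ M_c D(ξ)`, multiplying `x` by a suitable power of
`D(ξ)` gives a lift `y` that commutes with `M_c` on the nose, i.e. a circulant `y = ∑ c_s M_c^s`.
If `ȳ` also commutes with the image of a diagonal matrix `diag(d_k)`, then `d_k = ω' d_{s+k}` for
every `s` with `c_s ≠ 0`. For `d = D(ξ)` this allows a single `s`, so `ȳ` is a power of `M̄_c`.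
For `s ≠ 0` the relation makes `d` a scalar times a power of `D(ξ)`; since `⟨D̄(ξ)⟩` has prime
order, `K̄ ≠ ⟨D̄(ξ)⟩` provides a diagonal element of `K̄` outside it, so then `y` is scalar.
-/

namespace Subgroup

variable {G : Type*} [Group G]

theorem mem_centralizer_sup_zpowers_iff {H : Subgroup G} {a g : G} :
    g ∈ centralizer ↑(H ⊔ zpowers a) ↔ (∀ h ∈ H, Commute h g) ∧ Commute a g := by
  have key : ∀ L : Subgroup G, g ∈ centralizer ↑L ↔ L ≤ centralizer {g} := fun L =>
    forall₂_congr fun _ _ => mem_centralizer_singleton_iff.symm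
  rw [key, sup_le_iff, zpowers_le, mem_centralizer_singleton_iff]
  exact and_congr (forall₂_congr fun _ _ => mem_centralizer_singleton_iff) Iff.rfl

theorem eq_zpowers_of_le_of_ne_bot {K : Subgroup G} {a : G} (ha : (orderOf a).Prime)
    (hK : K ≤ zpowers a) (hK₀ : K ≠ ⊥) : K = zpowers a := by
  have : Fact (Nat.card (zpowers a)).Prime := ⟨Nat.card_zpowers a ▸ ha⟩
  rcases (K.subgroupOf (zpowers a)).eq_bot_or_eq_top_of_prime_card with h | h
  · rw [subgroupOf_eq_bot, disjoint_of_le_iff_left_eq_bot hK] at h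
    exact absurd h hK₀
  · exact le_antisymm hK (subgroupOf_eq_top.mp h)

end Subgroup

theorem IsPrimitiveRoot.pow_eq_pow_iff_natCast_eq {M : Type*} [CommMonoid M] {ξ : M} {n : ℕ}
    [NeZero n] (hξ : IsPrimitiveRoot ξ n) {a b : ℕ} : ξ ^ a = ξ ^ b ↔ (a : ZMod n) = b := by
  rw [(hξ.isOfFinOrder (NeZero.ne n)).pow_eq_pow_iff_modEq, ← hξ.eq_orderOf,
    ZMod.natCast_eq_natCast_iff]

theorem IsPrimitiveRoot.pow_val_add {M : Type*} [CommMonoid M] {ξ : M} {n : ℕ} [NeZero n]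
    (hξ : IsPrimitiveRoot ξ n) (i j : ZMod n) : ξ ^ (i + j).val = ξ ^ i.val * ξ ^ j.val := by
  rw [← pow_add, hξ.pow_eq_pow_iff_natCast_eq]
  simp

theorem pow_mul_eq_smul_mul_pow {R A : Type*} [CommSemiring R] [Semiring A] [Algebra R A]
    {a b : A} {c : R} (h : a * b = c • (b * a)) (k : ℕ) :
    a ^ k * b = c ^ k • (b * a ^ k) := by
  induction k with
  | zero => simp
  | succ k ih =>
    rw [pow_succ, mul_assoc, h, mul_smul_comm, ← mul_assoc, ih, smul_mul_assoc, smul_smul,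
      mul_assoc, ← pow_succ, ← pow_succ']

namespace Matrix

variable {n R : Type*} [DecidableEq n]

theorem of_eq_add_one_eq_circulant [AddCommGroupWithOne n] [Zero R] [One R] :
    (of fun i j : n => if i = j + 1 then (1 : R) else 0) = circulant (Pi.single 1 1) := by
  ext i j
  simp [Pi.single_apply, sub_eq_iff_eq_add, add_comm]

section

variable [Fintype n] [AddGroup n] [Semiring R]

theorem mul_circulant_single_one_apply (A : Matrix n n R) (a i j : n) :
    (A * circulant (Pi.single a 1) : Matrix n n R) i j = A i (a + j) := by
  simp [mul_apply, Pi.single_apply, sub_eq_iff_eq_add]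

theorem circulant_single_one_mul_apply (A : Matrix n n R) (a i j : n) :
    (circulant (Pi.single a 1) * A : Matrix n n R) i j = A (-a + i) j := by
  have hx : ∀ x, i = a + x ↔ x = -a + i := fun x => by rw [eq_neg_add_iff_add_eq, eq_comm]
  simp [mul_apply, Pi.single_apply, sub_eq_iff_eq_add, hx]

end

variable [Fintype n]

theorem circulant_single_one_pow [AddCommGroupWithOne n] [Semiring R] (k : ℕ) :
    circulant (Pi.single (1 : n) (1 : R)) ^ k = circulant (Pi.single (k : n) 1) := by
  induction k with
  | zero => simp
  | succ k ih =>
    ext i j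
    rw [pow_succ, ih, mul_circulant_single_one_apply]
    simp [Pi.single_apply, sub_add_eq_sub_sub, sub_eq_iff_eq_add, add_right_comm _ j]

theorem apply_eq_mul_apply_add_of_circulant_mul_diagonal [AddGroup n] [CommRing R]
    [IsDomain R] {c g : n → R} {ω : R}
    (h : circulant c * diagonal g = ω • (diagonal g * circulant c)) {s : n} (hs : c s ≠ 0)
    (k : n) : g k = ω * g (s + k) := by
  have hk := congrFun₂ h (s + k) k
  rw [mul_diagonal, smul_apply, diagonal_mul, circulant_apply, add_sub_cancel_right,
    smul_eq_mul, ← mul_assoc, mul_comm] at hk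
  exact mul_right_cancel₀ hs hk

variable {N : ℕ} [NeZero N]

theorem eq_circulant_of_commute {A : Matrix (ZMod N) (ZMod N) R} [Semiring R]
    (h : Commute A (circulant (Pi.single 1 1))) : A = circulant fun i => A i 0 := by
  have step : ∀ i j, A (1 + i) (1 + j) = A i j := fun i j => by
    simpa [mul_circulant_single_one_apply, circulant_single_one_mul_apply] using
      congrFun₂ h.eq (1 + i) j
  have shift : ∀ t : ℕ, ∀ i j, A (t + i) (t + j) = A i j := by
    intro t
    induction t with
    | zero => simp
    | succ t ih =>
      intro i j
      rw [Nat.cast_succ, add_comm _ (1 : ZMod N), add_assoc, add_assoc, step, ih]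
  ext i j
  simpa using shift j.val (i - j) 0

theorem circulant_eq_smul_pow_of_forall_ne {c : ZMod N → R} [Semiring R] {s : ZMod N}
    (h : ∀ s' ≠ s, c s' = 0) : circulant c = c s • circulant (Pi.single 1 1) ^ s.val := by
  have hc : c = c s • Pi.single s 1 := by
    ext s'
    by_cases hs' : s' = s
    · simp [hs']
    · simp [hs', h s' hs']
  rw [circulant_single_one_pow, ZMod.natCast_zmod_val, ← circulant_smul, ← hc]

theorem diagonal_pow_val_mul_circulant {ξ : R} [CommRing R] (hξ : IsPrimitiveRoot ξ N) :
    diagonal (fun i : ZMod N => ξ ^ i.val) * circulant (Pi.single 1 1) =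
      ξ • (circulant (Pi.single 1 1) * diagonal fun i : ZMod N => ξ ^ i.val) := by
  ext i j
  rw [smul_apply, diagonal_mul, mul_diagonal, circulant_apply]
  by_cases hij : i - j = 1
  · have hξ1 : ξ ^ (1 : ZMod N).val = ξ ^ 1 := hξ.pow_eq_pow_iff_natCast_eq.mpr (by simp)
    rw [sub_eq_iff_eq_add'.mp hij, hξ.pow_val_add, hξ1]
    simp [mul_comm]
  · simp [hij]

end Matrix

theorem exists_pow_of_apply_eq_mul_apply_add {K : Type*} [Field K] {p : ℕ} [Fact p.Prime]
    {ξ ω : K} (hξ : IsPrimitiveRoot ξ p) (hω : ω ^ p = 1) {g : ZMod p → K} {s : ZMod p}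
    (hs : s ≠ 0) (h : ∀ k, g k = ω * g (s + k)) :
    ∃ t : ℕ, ∀ i, g i = g 0 * (ξ ^ i.val) ^ t := by
  have hω₀ : ω ≠ 0 := by
    rintro rfl
    simp [(Fact.out : p.Prime).ne_zero] at hω
  obtain ⟨m, -, hm⟩ := hξ.eq_pow_of_pow_eq_one (ξ := ω⁻¹) (by rw [inv_pow, hω, inv_one])
  have step : ∀ k, g (s + k) = ξ ^ m * g k := fun k => by
    rw [hm, h k, inv_mul_cancel_left₀ hω₀]
  have orbit : ∀ j : ℕ, g (j * s) = ξ ^ (m * j) * g 0 := by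
    intro j
    induction j with
    | zero => simp
    | succ j ih =>
      rw [Nat.cast_succ, add_one_mul, add_comm, step, ih, ← mul_assoc, ← pow_add, mul_add_one,
        add_comm]
  refine ⟨(m * s⁻¹ : ZMod p).val, fun i => ?_⟩
  have hi : (((i * s⁻¹).val : ℕ) : ZMod p) * s = i := by simp [hs]
  conv_lhs => rw [← hi, orbit]
  rw [mul_comm, ← pow_mul, hξ.pow_eq_pow_iff_natCast_eq.mpr]
  simp only [Nat.cast_mul, ZMod.natCast_zmod_val]
  ring

namespace Matrix.SpecialLinearGroup

variable {n R : Type*} [Fintype n] [DecidableEq n] [CommRing R]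

theorem mk_eq_mk_iff {u v : SpecialLinearGroup n R} :
    (u : SpecialLinearGroup n R ⧸ Subgroup.center (SpecialLinearGroup n R)) = v ↔
      ∃ a : R, a ^ Fintype.card n = 1 ∧ (u : Matrix n n R) = a • (v : Matrix n n R) := by
  rw [eq_comm, QuotientGroup.eq, mem_center_iff]
  refine exists_congr fun a => and_congr Iff.rfl ⟨fun h => ?_, fun h => ?_⟩
  · rw [← mul_inv_cancel_left v u, coe_mul, ← h, scalar_apply, ← smul_one_eq_diagonal,
      mul_smul_comm, mul_one]
  · rw [coe_mul, h, mul_smul_comm, coe_inv, adjugate_mul, v.prop, one_smul, scalar_apply,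
      ← smul_one_eq_diagonal]

theorem mk_eq_mk_of_coe_eq_smul {u v : SpecialLinearGroup n R} {a : R}
    (h : (u : Matrix n n R) = a • (v : Matrix n n R)) :
    (u : SpecialLinearGroup n R ⧸ Subgroup.center (SpecialLinearGroup n R)) = v := by
  refine mk_eq_mk_iff.mpr ⟨a, ?_, h⟩
  simpa [h, v.prop] using u.prop

theorem commute_mk_iff {u v : SpecialLinearGroup n R} :
    Commute (u : SpecialLinearGroup n R ⧸ Subgroup.center (SpecialLinearGroup n R)) v ↔
      ∃ a : R, a ^ Fintype.card n = 1 ∧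
        (u : Matrix n n R) * v = a • ((v : Matrix n n R) * u) := by
  rw [Commute, SemiconjBy, ← QuotientGroup.mk_mul, ← QuotientGroup.mk_mul, mk_eq_mk_iff]
  rfl

theorem isDiag_of_mem_closure {x : SpecialLinearGroup n R}
    (hx : x ∈ Subgroup.closure {x : SpecialLinearGroup n R | (x : Matrix n n R).IsDiag}) :
    (x : Matrix n n R).IsDiag := by
  induction hx using Subgroup.closure_induction with
  | mem x hx => exact hx
  | one => exact isDiag_one
  | mul x y _ _ hx hy =>
    rw [coe_mul, ← hx.diagonal_diag, ← hy.diagonal_diag, diagonal_mul_diagonal]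
    exact isDiag_diagonal _
  | inv x _ hx =>
    rw [coe_inv, ← hx.diagonal_diag, adjugate_diagonal]
    exact isDiag_diagonal _

theorem ne_zero_of_coe_eq_smul [Nonempty n] [Nontrivial R] {x : SpecialLinearGroup n R}
    {c : R} {A : Matrix n n R} (h : (x : Matrix n n R) = c • A) : c ≠ 0 := by
  rintro rfl
  simpa [h] using x.prop

theorem exists_apply_eq_mul_apply_add_of_commute_mk [AddGroup n] [IsDomain R]
    {u v : SpecialLinearGroup n R} {c g : n → R} (hu : (u : Matrix n n R) = circulant c)
    (hv : (v : Matrix n n R) = diagonal g)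
    (h : Commute (u : SpecialLinearGroup n R ⧸ Subgroup.center (SpecialLinearGroup n R)) v) :
    ∃ ω : R, ω ^ Fintype.card n = 1 ∧ ∀ s, c s ≠ 0 → ∀ k, g k = ω * g (s + k) := by
  obtain ⟨ω, hω, huv⟩ := commute_mk_iff.mp h
  rw [hu, hv] at huv
  exact ⟨ω, hω, fun s hs => apply_eq_mul_apply_add_of_circulant_mul_diagonal huv hs⟩

end Matrix.SpecialLinearGroup

section PSL

open Matrix.SpecialLinearGroup

variable {p : ℕ} [Fact p.Prime] {ξ cD cM : ℂ} {Dm Mm : SpecialLinearGroup (ZMod p) ℂ}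

local notation:1024 "↑ₘ" A:1024 => Subtype.val (A : SpecialLinearGroup (ZMod p) ℂ)

theorem commute_of_mem_DbarSub {a b : PSL p} (ha : a ∈ DbarSub p) (hb : b ∈ DbarSub p) :
    Commute a b := by
  obtain ⟨x, hx, rfl⟩ := ha
  obtain ⟨y, hy, rfl⟩ := hb
  have h : Commute ↑ₘx y := by
    rw [← (isDiag_of_mem_closure hx).diagonal_diag, ← (isDiag_of_mem_closure hy).diagonal_diag]
    exact commute_diagonal _ _
  refine Commute.map (?_ : Commute x y) _
  ext i j
  rw [coe_mul, coe_mul, h.eq]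

theorem exists_isDiag_of_mem_DbarSub {k : PSL p} (hk : k ∈ DbarSub p) :
    ∃ d : SpecialLinearGroup (ZMod p) ℂ, (↑ₘd).IsDiag ∧ projPSL p d = k := by
  obtain ⟨d, hd, rfl⟩ := hk
  exact ⟨d, isDiag_of_mem_closure hd, rfl⟩

theorem coe_mul_coe_eq_smul (hξ : IsPrimitiveRoot ξ p)
    (hD : ↑ₘDm = cD • diagonal fun i : ZMod p => ξ ^ i.val)
    (hM : ↑ₘMm = cM • circulant (Pi.single 1 1)) :
    ↑ₘDm * Mm = ξ • (↑ₘMm * Dm) := by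
  rw [hD, hM, smul_mul_smul_comm, smul_mul_smul_comm, diagonal_pow_val_mul_circulant hξ,
    smul_comm, mul_comm]

theorem orderOf_projPSL_of_coe_eq_smul_diagonal (hξ : IsPrimitiveRoot ξ p)
    (hD : ↑ₘDm = cD • diagonal fun i : ZMod p => ξ ^ i.val) :
    orderOf (projPSL p Dm) = p := by
  refine orderOf_eq_prime ?_ fun h => ?_
  · have hpow : (fun i : ZMod p => ξ ^ i.val) ^ p = fun _ => 1 := funext fun i => by
      rw [Pi.pow_apply, ← pow_mul, mul_comm, pow_mul, hξ.pow_eq_one, one_pow]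
    have : ↑ₘ(Dm ^ p) = cD ^ p • ↑ₘ(1 : SpecialLinearGroup (ZMod p) ℂ) := by
      rw [coe_pow, hD, smul_pow, diagonal_pow, hpow, diagonal_one, coe_one]
    have e : projPSL p (Dm ^ p) = projPSL p 1 := mk_eq_mk_of_coe_eq_smul this
    rwa [map_pow, map_one] at e
  · obtain ⟨a, -, ha⟩ := (mk_eq_mk_iff (u := Dm) (v := 1)).mp h
    have hdiag : ∀ i : ZMod p, cD * ξ ^ i.val = a := fun i => by
      simpa [hD] using congrFun₂ ha i i
    have : ξ ^ (1 : ZMod p).val = ξ ^ (0 : ZMod p).val :=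
      mul_left_cancel₀ (ne_zero_of_coe_eq_smul hD) ((hdiag 1).trans (hdiag 0).symm)
    simpa using hξ.pow_eq_pow_iff_natCast_eq.mp this

theorem projPSL_mem_zpowers_of_apply_eq_mul_apply_add (hξ : IsPrimitiveRoot ξ p)
    (hD : ↑ₘDm = cD • diagonal fun i : ZMod p => ξ ^ i.val)
    {d : SpecialLinearGroup (ZMod p) ℂ} {g : ZMod p → ℂ}
    (hd : ↑ₘd = diagonal g) {ω : ℂ} (hω : ω ^ p = 1)
    {s : ZMod p} (hs : s ≠ 0) (h : ∀ k, g k = ω * g (s + k)) :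
    projPSL p d ∈ Subgroup.zpowers (projPSL p Dm) := by
  obtain ⟨t, ht⟩ := exists_pow_of_apply_eq_mul_apply_add hξ hω hs h
  have hcD := pow_ne_zero t (ne_zero_of_coe_eq_smul hD)
  have : ↑ₘd = (g 0 / cD ^ t) • ↑(Dm ^ t) := by
    rw [coe_pow, hD, smul_pow, smul_smul, div_mul_cancel₀ _ hcD, diagonal_pow, hd,
      ← diagonal_smul]
    exact congrArg diagonal (funext ht)
  have e : projPSL p d = projPSL p (Dm ^ t) := mk_eq_mk_of_coe_eq_smul this
  rw [e, map_pow]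
  exact Subgroup.pow_mem _ (Subgroup.mem_zpowers _) t

theorem exists_circulant_of_commute_projPSL (hξ : IsPrimitiveRoot ξ p)
    (hDM : ↑ₘDm * Mm = ξ • (↑ₘMm * Dm)) (hM : ↑ₘMm = cM • circulant (Pi.single 1 1))
    {x : PSL p} (hx : Commute x (projPSL p Mm)) :
    ∃ (e : ℕ) (y : SpecialLinearGroup (ZMod p) ℂ),
      projPSL p Dm ^ e * x = projPSL p y ∧ ↑ₘy = circulant fun i => ↑ₘy i 0 := by
  obtain ⟨x, rfl⟩ := QuotientGroup.mk_surjective x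
  obtain ⟨ω, hω, hxM⟩ := commute_mk_iff.mp hx
  rw [ZMod.card] at hω
  obtain ⟨e, -, he⟩ := hξ.eq_pow_of_pow_eq_one (ξ := ω⁻¹) (by rw [inv_pow, hω, inv_one])
  have hω₀ : ω ≠ 0 := by rintro rfl; simp [(Fact.out : p.Prime).ne_zero] at hω
  refine ⟨e, Dm ^ e * x, by rw [map_mul, map_pow]; rfl, eq_circulant_of_commute ?_⟩
  -- the twist `ω` of `x` against `Mm` is undone by that of `Dm ^ e`
  have hyM : Commute ↑ₘ(Dm ^ e * x) Mm := by
    rw [Commute, SemiconjBy, coe_mul, coe_pow, mul_assoc, hxM, mul_smul_comm, ← mul_assoc,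
      pow_mul_eq_smul_mul_pow hDM, he, smul_mul_assoc, smul_smul, mul_inv_cancel₀ hω₀,
      one_smul, mul_assoc]
  rw [hM] at hyM
  exact smul_right_injective _ (ne_zero_of_coe_eq_smul hM)
    (by simpa only [smul_mul_assoc, mul_smul_comm] using hyM.eq)

theorem projPSL_mem_zpowers_of_commute_of_circulant (hξ : IsPrimitiveRoot ξ p)
    (hD : ↑ₘDm = cD • diagonal fun i : ZMod p => ξ ^ i.val)
    (hM : ↑ₘMm = cM • circulant (Pi.single 1 1))
    {y : SpecialLinearGroup (ZMod p) ℂ} {c : ZMod p → ℂ}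
    (hy : ↑ₘy = circulant c)
    (h : Commute (projPSL p y) (projPSL p Dm)) :
    projPSL p y ∈ Subgroup.zpowers (projPSL p Mm) := by
  have hD' : ↑ₘDm = diagonal fun i => cD * ξ ^ i.val := by
    rw [hD, ← diagonal_smul]
    rfl
  obtain ⟨ω, -, hω⟩ := exists_apply_eq_mul_apply_add_of_commute_mk hy hD' h
  -- a nonzero `c s` forces `ω * ξ ^ s = 1`
  have hsupp : ∀ s s', c s ≠ 0 → c s' ≠ 0 → s = s' := by
    intro s s' hs hs'
    have h1 := hω s hs 0
    have h2 := hω s' hs' 0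
    simp only [ZMod.val_zero, pow_zero, mul_one, add_zero] at h1 h2
    have hcD := ne_zero_of_coe_eq_smul hD
    have hω₀ : ω ≠ 0 := by
      rintro rfl
      exact hcD (by simpa using h1)
    have : ξ ^ s.val = ξ ^ s'.val :=
      mul_left_cancel₀ hcD (mul_left_cancel₀ hω₀ (h1.symm.trans h2))
    simpa using hξ.pow_eq_pow_iff_natCast_eq.mp this
  obtain ⟨s, hs⟩ : ∃ s, ∀ s' ≠ s, c s' = 0 := by
    by_cases hc : ∃ s, c s ≠ 0
    · obtain ⟨s, hs⟩ := hc
      exact ⟨s, fun s' hs' => by_contra fun h => hs' (hsupp _ _ h hs)⟩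
    · push Not at hc
      exact ⟨0, fun s' _ => hc s'⟩
  have hcM := pow_ne_zero s.val (ne_zero_of_coe_eq_smul hM)
  have : ↑ₘy = (c s / cM ^ s.val) • ↑(Mm ^ s.val) := by
    rw [hy, circulant_eq_smul_pow_of_forall_ne hs, coe_pow, hM, smul_pow, smul_smul,
      div_mul_cancel₀ _ hcM]
  have e : projPSL p y = projPSL p (Mm ^ s.val) := mk_eq_mk_of_coe_eq_smul this
  rw [e, map_pow]
  exact Subgroup.pow_mem _ (Subgroup.mem_zpowers _) _

theorem projPSL_eq_one_of_commute_of_circulant (hξ : IsPrimitiveRoot ξ p)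
    (hD : ↑ₘDm = cD • diagonal fun i : ZMod p => ξ ^ i.val)
    {y : SpecialLinearGroup (ZMod p) ℂ} {c : ZMod p → ℂ}
    (hy : ↑ₘy = circulant c)
    {d : SpecialLinearGroup (ZMod p) ℂ} (hd : (↑ₘd).IsDiag)
    (hdD : projPSL p d ∉ Subgroup.zpowers (projPSL p Dm))
    (h : Commute (projPSL p y) (projPSL p d)) :
    projPSL p y = 1 := by
  obtain ⟨ω, hω₁, hω⟩ :=
    exists_apply_eq_mul_apply_add_of_commute_mk hy hd.diagonal_diag.symm h
  rw [ZMod.card] at hω₁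
  have hc : ∀ s ≠ 0, c s = 0 := fun s hs => by_contra fun hcs =>
    hdD (projPSL_mem_zpowers_of_apply_eq_mul_apply_add hξ hD hd.diagonal_diag.symm hω₁ hs
      (hω s hcs))
  have : ↑ₘy = c 0 • ↑ₘ(1 : SpecialLinearGroup (ZMod p) ℂ) := by
    rw [hy, circulant_eq_smul_pow_of_forall_ne hc, ZMod.val_zero, pow_zero, coe_one]
  have e : projPSL p y = projPSL p 1 := mk_eq_mk_of_coe_eq_smul this
  rw [e, map_one]

theorem projPSL_mem_centralizer (hξ : IsPrimitiveRoot ξ p)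
    (hD : ↑ₘDm = cD • diagonal fun i : ZMod p => ξ ^ i.val)
    (hM : ↑ₘMm = cM • circulant (Pi.single 1 1))
    {K : Subgroup (PSL p)} (hKD : K ≤ DbarSub p) :
    projPSL p Dm ∈ Subgroup.centralizer ↑(K ⊔ Subgroup.zpowers (projPSL p Mm)) := by
  have hDbar : projPSL p Dm ∈ DbarSub p :=
    ⟨Dm, Subgroup.subset_closure (show (↑ₘDm).IsDiag from
      hD ▸ (isDiag_diagonal _).smul cD), rfl⟩
  have hDM : Commute (projPSL p Dm) (projPSL p Mm) :=
    commute_mk_iff.mpr ⟨ξ, by rw [ZMod.card, hξ.pow_eq_one], coe_mul_coe_eq_smul hξ hD hM⟩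
  exact Subgroup.mem_centralizer_sup_zpowers_iff.mpr
    ⟨fun k hk => commute_of_mem_DbarSub (hKD hk) hDbar, hDM.symm⟩

theorem exists_circulant_of_mem_centralizer (hξ : IsPrimitiveRoot ξ p)
    (hD : ↑ₘDm = cD • diagonal fun i : ZMod p => ξ ^ i.val)
    (hM : ↑ₘMm = cM • circulant (Pi.single 1 1))
    {K : Subgroup (PSL p)} (hKD : K ≤ DbarSub p) {x : PSL p}
    (hx : x ∈ Subgroup.centralizer ↑(K ⊔ Subgroup.zpowers (projPSL p Mm))) :
    ∃ (e : ℕ) (y : SpecialLinearGroup (ZMod p) ℂ),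
      x = (projPSL p Dm ^ e)⁻¹ * projPSL p y ∧
      (∀ k ∈ K, Commute k (projPSL p y)) ∧
      ↑ₘy = circulant fun i => ↑ₘy i 0 := by
  obtain ⟨hxK, hxM⟩ := Subgroup.mem_centralizer_sup_zpowers_iff.mp hx
  obtain ⟨e, y, hxy, hy⟩ :=
    exists_circulant_of_commute_projPSL hξ (coe_mul_coe_eq_smul hξ hD hM) hM hxM.symm
  refine ⟨e, y, eq_inv_mul_of_mul_eq hxy, fun k hk => hxy ▸ ?_, hy⟩
  have hDC := Subgroup.mem_centralizer_sup_zpowers_iff.mp (projPSL_mem_centralizer hξ hD hM hKD)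
  exact ((hDC.1 k hk).pow_right e).mul_right (hxK k hk)

theorem centralizer_le_sup_zpowers (hξ : IsPrimitiveRoot ξ p)
    (hD : ↑ₘDm = cD • diagonal fun i : ZMod p => ξ ^ i.val)
    (hM : ↑ₘMm = cM • circulant (Pi.single 1 1))
    {K : Subgroup (PSL p)} (hKD : K ≤ DbarSub p) (hDK : projPSL p Dm ∈ K) :
    Subgroup.centralizer ↑(K ⊔ Subgroup.zpowers (projPSL p Mm)) ≤
      Subgroup.zpowers (projPSL p Dm) ⊔ Subgroup.zpowers (projPSL p Mm) := by
  intro x hx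
  obtain ⟨e, y, rfl, hyK, hy⟩ := exists_circulant_of_mem_centralizer hξ hD hM hKD hx
  have hyM := projPSL_mem_zpowers_of_commute_of_circulant hξ hD hM hy (hyK _ hDK).symm
  exact mul_mem (inv_mem (Subgroup.mem_sup_left (pow_mem (Subgroup.mem_zpowers _) e)))
    (Subgroup.mem_sup_right hyM)

theorem centralizer_le_zpowers (hξ : IsPrimitiveRoot ξ p)
    (hD : ↑ₘDm = cD • diagonal fun i : ZMod p => ξ ^ i.val)
    (hM : ↑ₘMm = cM • circulant (Pi.single 1 1))
    {K : Subgroup (PSL p)} (hKD : K ≤ DbarSub p) (hK : ¬K ≤ Subgroup.zpowers (projPSL p Dm)) :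
    Subgroup.centralizer ↑(K ⊔ Subgroup.zpowers (projPSL p Mm)) ≤
      Subgroup.zpowers (projPSL p Dm) := by
  intro x hx
  obtain ⟨e, y, rfl, hyK, hy⟩ := exists_circulant_of_mem_centralizer hξ hD hM hKD hx
  obtain ⟨k, hk, hkD⟩ := Set.not_subset.mp hK
  obtain ⟨d, hd, rfl⟩ := exists_isDiag_of_mem_DbarSub (hKD hk)
  rw [projPSL_eq_one_of_commute_of_circulant hξ hD hy hd hkD (hyK _ hk).symm, mul_one]
  exact inv_mem (pow_mem (Subgroup.mem_zpowers _) e)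

end PSL

open Subgroup in
theorem centralizer_K_Mc_general (p : ℕ) [Fact p.Prime] (ξ : ℂ) (hξ : IsPrimitiveRoot ξ p)
    (Dm Mm : Matrix.SpecialLinearGroup (ZMod p) ℂ)
    (hD : ∃ c : ℂ, (Dm : Matrix (ZMod p) (ZMod p) ℂ) =
      c • Matrix.diagonal fun i : ZMod p => ξ ^ i.val)
    (hM : ∃ c : ℂ, (Mm : Matrix (ZMod p) (ZMod p) ℂ) =
      c • Matrix.of fun i j : ZMod p => if i = j + 1 then (1 : ℂ) else 0)
    (K : Subgroup (PSL p)) (hKD : K ≤ DbarSub p) (hKnt : K ≠ ⊥) :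
    (K = Subgroup.zpowers (projPSL p Dm) →
      Subgroup.centralizer ↑(K ⊔ Subgroup.zpowers (projPSL p Mm)) =
        Subgroup.zpowers (projPSL p Dm) ⊔ Subgroup.zpowers (projPSL p Mm)) ∧
    (K ≠ Subgroup.zpowers (projPSL p Dm) →
      Subgroup.centralizer ↑(K ⊔ Subgroup.zpowers (projPSL p Mm)) =
        Subgroup.zpowers (projPSL p Dm)) := by
  obtain ⟨cD, hD⟩ := hD
  obtain ⟨cM, hM⟩ := hM
  rw [Matrix.of_eq_add_one_eq_circulant] at hM
  have hDC := projPSL_mem_centralizer hξ hD hM hKD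
  refine ⟨fun hK => le_antisymm ?_ ?_, fun hK => le_antisymm ?_ (zpowers_le.mpr hDC)⟩
  · exact centralizer_le_sup_zpowers hξ hD hM hKD (hK ▸ mem_zpowers _)
  · have hMD := (mem_centralizer_sup_zpowers_iff.mp hDC).2
    refine sup_le (zpowers_le.mpr hDC)
      (zpowers_le.mpr (mem_centralizer_sup_zpowers_iff.mpr ⟨fun k hk => ?_, Commute.refl _⟩))
    obtain ⟨n, rfl⟩ := mem_zpowers_iff.mp (hK ▸ hk)
    exact (hMD.zpow_right n).symm
  · refine centralizer_le_zpowers hξ hD hM hKD fun hle => hK ?_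
    refine eq_zpowers_of_le_of_ne_bot ?_ hle hKnt
    rw [orderOf_projPSL_of_coe_eq_smul_diagonal hξ hD]
    exact Fact.out

/-- Let `p` be a prime and `K̄` a nontrivial subgroup of `D̄ ≤ PSL(p,ℂ)`
stable by conjugation by `M̄_c`.  Then the centralizer of `K̄ ⋊ ⟨M̄_c⟩` in `PSL(p,ℂ)` is
`⟨D̄(ξ)⟩ × ⟨M̄_c⟩` if `K̄ = ⟨D̄(ξ)⟩` and is `⟨D̄(ξ)⟩` otherwise. -/
theorem centralizer_K_Mc (p : ℕ) [Fact p.Prime] (ξ : ℂ) (hξ : IsPrimitiveRoot ξ p)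
    (Dm Mm : Matrix.SpecialLinearGroup (ZMod p) ℂ)
    (hD : ∃ c : ℂ, (Dm : Matrix (ZMod p) (ZMod p) ℂ) =
      c • Matrix.diagonal fun i : ZMod p => ξ ^ i.val)
    (hM : ∃ c : ℂ, (Mm : Matrix (ZMod p) (ZMod p) ℂ) =
      c • Matrix.of fun i j : ZMod p => if i = j + 1 then (1 : ℂ) else 0)
    (K : Subgroup (PSL p)) (hKD : K ≤ DbarSub p) (hKnt : K ≠ ⊥)
    (hstab : ∀ x ∈ K, projPSL p Mm * x * (projPSL p Mm)⁻¹ ∈ K) :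
    (K = Subgroup.zpowers (projPSL p Dm) →
      Subgroup.centralizer ↑(K ⊔ Subgroup.zpowers (projPSL p Mm)) =
        Subgroup.zpowers (projPSL p Dm) ⊔ Subgroup.zpowers (projPSL p Mm)) ∧
    (K ≠ Subgroup.zpowers (projPSL p Dm) →
      Subgroup.centralizer ↑(K ⊔ Subgroup.zpowers (projPSL p Mm)) =
        Subgroup.zpowers (projPSL p Dm)) :=
  centralizer_K_Mc_general p ξ hξ Dm Mm hD hM K hKD hKnt
end

section
/- Let p be an odd prime. The subgroup of Aut(⟨D̄(ξ)⟩ × ⟨M̄_c⟩) ≅ GL(2, ℤ/p) consisting of those automorphisms induced by conjugation by elements of the normalizer of ⟨D̄(ξ)⟩ × ⟨M̄_c⟩ in PSL(p,ℂ) is exactly SL(2, ℤ/p). -/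
open Matrix

/-!
Lift to `D, M ∈ SL(p, ℂ)`. Their commutator `⁅D, M⁆` is the central scalar `ξ`, of order `p`, and
a commutator of lifts depends only on the images in `PSL(p, ℂ)`. If `g` sends `D̄ ↦ D̄ᵃ M̄ᶜ` and
`M̄ ↦ D̄ᵇ M̄ᵈ`, then the commutator of lifts of these images is `ξ` (conjugation fixes a central
element) and also `ξ ^ (ad - bc)` (commutators with central values are bilinear), so
`ad - bc = 1`.

Conversely, the matrices induced by conjugation are closed under products. The chirp matrix
`diag(ξ ^ (i(i+1)/2))` induces `[[1,1],[0,1]]` and the Fourier matrix `(ξ ^ ij)` induces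
`[[0,1],[-1,0]]`; over `ℂ` both can be rescaled into `SL(p, ℂ)`. Together they produce every
transvection, and transvections generate `SL(2, ℤ/p)`.
-/

open scoped commutatorElement

section ZModPow

variable {M : Type*} [Monoid M] {n : ℕ} {g : M}

theorem pow_val_add_of_pow_eq_one [NeZero n] (hg : g ^ n = 1) (a b : ZMod n) :
    g ^ (a + b).val = g ^ a.val * g ^ b.val := by
  rw [ZMod.val_add, ← pow_eq_pow_mod _ hg, pow_add]

theorem pow_val_mul_of_pow_eq_one (hg : g ^ n = 1) (a b : ZMod n) :
    g ^ (a * b).val = (g ^ a.val) ^ b.val := by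
  rw [ZMod.val_mul, ← pow_eq_pow_mod _ hg, pow_mul]

theorem pow_val_natCast_of_pow_eq_one (hg : g ^ n = 1) (m : ℕ) : g ^ (m : ZMod n).val = g ^ m := by
  rw [ZMod.val_natCast, ← pow_eq_pow_mod _ hg]

end ZModPow

section PowPair

variable {G : Type*} [Group G] {n : ℕ} {x y g h : G} {A B : Matrix (Fin 2) (Fin 2) (ZMod n)}

def powPair (x y : G) (v : Fin 2 → ZMod n) : G := x ^ (v 0).val * y ^ (v 1).val

@[simp]
theorem powPair_zero : powPair x y (0 : Fin 2 → ZMod n) = 1 := by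
  simp [powPair]

theorem powPair_add [NeZero n] (hxy : Commute x y) (hx : x ^ n = 1) (hy : y ^ n = 1)
    (v w : Fin 2 → ZMod n) : powPair x y (v + w) = powPair x y v * powPair x y w := by
  simp only [powPair, Pi.add_apply, pow_val_add_of_pow_eq_one hx, pow_val_add_of_pow_eq_one hy,
    mul_assoc, (hxy.pow_pow _ _).symm.left_comm]

theorem powPair_nsmul [NeZero n] (hxy : Commute x y) (hx : x ^ n = 1) (hy : y ^ n = 1)
    (k : ℕ) (v : Fin 2 → ZMod n) : powPair x y (k • v) = powPair x y v ^ k := by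
  induction k with
  | zero => simp
  | succ k ih => rw [succ_nsmul, powPair_add hxy hx hy, ih, pow_succ]

/-- Conjugation by `g` acts on `⟨x⟩ × ⟨y⟩ ≅ (ZMod n)²`, with basis `(x, y)`, as the matrix `A`. -/
def InducesMatrix (x y g : G) (A : Matrix (Fin 2) (Fin 2) (ZMod n)) : Prop :=
  ∀ v, g * powPair x y v * g⁻¹ = powPair x y (A *ᵥ v)

theorem inducesMatrix_one : InducesMatrix x y 1 (1 : Matrix (Fin 2) (Fin 2) (ZMod n)) := by
  simp [InducesMatrix]

theorem InducesMatrix.mul (hg : InducesMatrix x y g A) (hh : InducesMatrix x y h B) :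
    InducesMatrix x y (g * h) (A * B) := by
  intro v
  rw [← mulVec_mulVec, ← hg, ← hh]
  group

theorem inducesMatrix_of_conj_eq [NeZero n] (hxy : Commute x y) (hx : x ^ n = 1) (hy : y ^ n = 1)
    (h₀ : g * x * g⁻¹ = powPair x y (A · 0)) (h₁ : g * y * g⁻¹ = powPair x y (A · 1)) :
    InducesMatrix x y g A := by
  intro v
  have hv : A *ᵥ v = (v 0).val • (A · 0) + (v 1).val • (A · 1) := by
    ext i
    simp [-ZMod.natCast_val, ZMod.natCast_zmod_val, mulVec, dotProduct, Fin.sum_univ_two, mul_comm]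
  rw [hv, powPair_add hxy hx hy, powPair_nsmul hxy hx hy, powPair_nsmul hxy hx hy, ← h₀, ← h₁,
    conj_pow, conj_pow, powPair]
  group

theorem InducesMatrix.conj_eq [Fact (1 < n)] (hg : InducesMatrix x y g A) :
    g * x * g⁻¹ = x ^ (A 0 0).val * y ^ (A 1 0).val ∧
      g * y * g⁻¹ = x ^ (A 0 1).val * y ^ (A 1 1).val := by
  constructor
  · simpa [powPair, ZMod.val_one] using hg (Pi.single 0 1)
  · simpa [powPair, ZMod.val_one] using hg (Pi.single 1 1)

theorem map_powPair {H : Type*} [Group H] (f : G →* H) (x y : G) (v : Fin 2 → ZMod n) :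
    f (powPair x y v) = powPair (f x) (f y) v := by
  simp [powPair]

end PowPair

section Commutator

open Subgroup

variable {G : Type*} [Group G] {a b c : G}

theorem commutatorElement_mul_left_of_mem_center (h : ⁅b, c⁆ ∈ center G) :
    ⁅a * b, c⁆ = ⁅b, c⁆ * ⁅a, c⁆ := by
  rw [commutatorElement_mul_left_eq_conj_mul, mem_center_iff.mp h a, mul_inv_cancel_right]

theorem commutatorElement_mul_right_of_mem_center (h : ⁅a, c⁆ ∈ center G) :
    ⁅a, b * c⁆ = ⁅a, b⁆ * ⁅a, c⁆ := by
  rw [commutatorElement_mul_right_eq_mul_conj, mul_assoc _ b, mem_center_iff.mp h b,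
    mul_assoc, mul_inv_cancel_right]

theorem commutatorElement_pow_left (h : ⁅a, b⁆ ∈ center G) (i : ℕ) :
    ⁅a ^ i, b⁆ = ⁅a, b⁆ ^ i := by
  induction i with
  | zero => simp
  | succ i ih => rw [pow_succ, commutatorElement_mul_left_of_mem_center h, ih, pow_succ']

theorem commutatorElement_pow_right (h : ⁅a, b⁆ ∈ center G) (j : ℕ) :
    ⁅a, b ^ j⁆ = ⁅a, b⁆ ^ j := by
  induction j with
  | zero => simp
  | succ j ih => rw [pow_succ, commutatorElement_mul_right_of_mem_center h, ih, pow_succ]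

theorem commutatorElement_pow_pow (h : ⁅a, b⁆ ∈ center G) (i j : ℕ) :
    ⁅a ^ i, b ^ j⁆ = ⁅a, b⁆ ^ (i * j) := by
  have h' : ⁅a ^ i, b⁆ ∈ center G := by
    rw [commutatorElement_pow_left h]
    exact pow_mem h i
  rw [commutatorElement_pow_right h', commutatorElement_pow_left h, pow_mul]

theorem commutatorElement_pow_mul_pow (h : ⁅a, b⁆ ∈ center G) (i j k l : ℕ) :
    ⁅a ^ i * b ^ j, a ^ k * b ^ l⁆ = ⁅a, b⁆ ^ ((i * l : ℤ) - j * k) := by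
  have hself : ∀ (g : G) (m m' : ℕ), ⁅g ^ m, g ^ m'⁆ = 1 := fun g m m' =>
    commutatorElement_eq_one_iff_commute.mpr (Commute.pow_pow_self g m m')
  have hb : ⁅b ^ j, a ^ k * b ^ l⁆ = (⁅a, b⁆ ^ (k * j))⁻¹ := by
    rw [commutatorElement_mul_right_of_mem_center (by rw [hself]; exact one_mem _), hself,
      mul_one, ← commutatorElement_inv, commutatorElement_pow_pow h]
  have ha : ⁅a ^ i, a ^ k * b ^ l⁆ = ⁅a, b⁆ ^ (i * l) := by
    rw [commutatorElement_mul_right_of_mem_center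
      (by rw [commutatorElement_pow_pow h]; exact pow_mem h _), hself, one_mul,
      commutatorElement_pow_pow h]
  rw [commutatorElement_mul_left_of_mem_center (by rw [hb]; exact inv_mem (pow_mem h _)), hb, ha,
    sub_eq_neg_add, _root_.zpow_add, _root_.zpow_neg, mul_comm (j : ℤ)]
  norm_cast

theorem commutatorElement_eq_of_mk_eq {N : Subgroup G} [N.Normal] (hN : N ≤ center G)
    {a' b' : G} (ha : (a : G ⧸ N) = a') (hb : (b : G ⧸ N) = b') : ⁅a, b⁆ = ⁅a', b'⁆ := by
  obtain ⟨u, hu, rfl⟩ : ∃ u ∈ center G, a' = a * u :=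
    ⟨a⁻¹ * a', hN (QuotientGroup.eq.mp ha), by group⟩
  obtain ⟨w, hw, rfl⟩ : ∃ w ∈ center G, b' = b * w :=
    ⟨b⁻¹ * b', hN (QuotientGroup.eq.mp hb), by group⟩
  rw [commutatorElement_mul_left_eq_conj_mul,
    commutatorElement_eq_one_iff_commute.mpr (mem_center_iff.mp hu _).symm, mul_one,
    mul_inv_cancel, one_mul, commutatorElement_mul_right_eq_mul_conj,
    commutatorElement_eq_one_iff_commute.mpr (mem_center_iff.mp hw a), mul_one,
    mul_inv_cancel_right]

end Commutator

theorem Matrix.orderOf_scalar {ι R : Type*} [Fintype ι] [DecidableEq ι] [Nonempty ι] [CommRing R]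
    (r : R) : orderOf (scalar ι r) = orderOf r := by
  have h := orderOf_injective (scalar ι : R →+* Matrix ι ι R).toMonoidHom
    (fun _ _ h => scalar_inj.mp h) r
  rwa [RingHom.toMonoidHom_eq_coe, MonoidHom.coe_coe] at h

namespace Matrix.SpecialLinearGroup

variable {ι : Type*} [Fintype ι] [DecidableEq ι]

theorem exists_forall_conj_eq {K : Type*} [Field K] [IsAlgClosed K] [Nonempty ι]
    {N : Matrix ι ι K} (hN : N.det ≠ 0) :
    ∃ G : SpecialLinearGroup ι K, ∀ X Y : SpecialLinearGroup ι K,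
      N * (X : Matrix ι ι K) = Y * N → G * X * G⁻¹ = Y := by
  obtain ⟨μ, hμ⟩ := IsAlgClosed.exists_pow_nat_eq N.det⁻¹ (Fintype.card_pos (α := ι))
  let G : SpecialLinearGroup ι K := ⟨μ • N, by rw [det_smul, hμ, inv_mul_cancel₀ hN]⟩
  refine ⟨G, fun X Y h => mul_inv_eq_of_eq_mul (Subtype.ext ?_)⟩
  change μ • N * X = Y * (μ • N)
  rw [Matrix.smul_mul, Matrix.mul_smul, h]

theorem coe_commutatorElement_of_mul_eq_smul {R : Type*} [CommRing R]
    {X Y : SpecialLinearGroup ι R} {r : R}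
    (h : (X : Matrix ι ι R) * Y = r • ((Y : Matrix ι ι R) * X)) :
    ((⁅X, Y⁆ : SpecialLinearGroup ι R) : Matrix ι ι R) = scalar ι r := by
  calc ((⁅X, Y⁆ : SpecialLinearGroup ι R) : Matrix ι ι R)
      = X * Y * ((X⁻¹ * Y⁻¹ : SpecialLinearGroup ι R) : Matrix ι ι R) := by
        rw [commutatorElement_def, mul_assoc _ X⁻¹, coe_mul, coe_mul]
    _ = r • ((Y * X * (X⁻¹ * Y⁻¹) : SpecialLinearGroup ι R) : Matrix ι ι R) := by
        rw [h, smul_mul]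
        simp only [coe_mul]
    _ = scalar ι r := by
        rw [show Y * X * (X⁻¹ * Y⁻¹) = 1 by group, coe_one, smul_one_eq_diagonal]
        rfl

end Matrix.SpecialLinearGroup

section ClockShift

variable (n : ℕ) {R : Type*} [CommRing R] (ξ : R)

/-- The paper's `D(ξ)`; `shiftMatrix` below is its `M_c`. -/
def clockMatrix : Matrix (ZMod n) (ZMod n) R := diagonal fun i => ξ ^ i.val

def shiftMatrix (R : Type*) [CommRing R] : Matrix (ZMod n) (ZMod n) R :=
  of fun i j => if i = j + 1 then 1 else 0

/-- The paper's `S`, with `i(i+1)/2` computed in `ZMod n`; `2⁻¹` is junk unless `n` is odd. -/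
def chirpMatrix : Matrix (ZMod n) (ZMod n) R := diagonal fun i => ξ ^ (i * (i + 1) * 2⁻¹).val

/-- The paper's Vandermonde matrix `V₀`. -/
def fourierMatrix : Matrix (ZMod n) (ZMod n) R := of fun i j => ξ ^ (i * j).val

variable {n ξ} [NeZero n]

theorem shiftMatrix_pow (k : ℕ) :
    shiftMatrix n R ^ k = of fun i j : ZMod n => if i = j + k then (1 : R) else 0 := by
  induction k with
  | zero => ext i j; simp [one_apply]
  | succ k ih =>
    ext i j
    rw [pow_succ, ih, shiftMatrix, mul_apply]
    simp only [of_apply, mul_ite, mul_one, mul_zero, Finset.sum_ite_eq', Finset.mem_univ, if_true,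
      Nat.cast_succ, add_comm (k : ZMod n), add_assoc]

theorem shiftMatrix_pow_self : shiftMatrix n R ^ n = 1 := by
  ext i j
  simp [shiftMatrix_pow, one_apply]

theorem clockMatrix_pow_self (hξ : ξ ^ n = 1) : clockMatrix n ξ ^ n = 1 := by
  have h : (fun i : ZMod n => ξ ^ i.val) ^ n = 1 :=
    funext fun i => by rw [Pi.pow_apply, ← pow_mul, mul_comm, pow_mul, hξ, one_pow, Pi.one_apply]
  rw [clockMatrix, diagonal_pow, h]
  exact diagonal_one

theorem clockMatrix_mul_shiftMatrix (hξ : ξ ^ n = 1) :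
    clockMatrix n ξ * shiftMatrix n R = ξ • (shiftMatrix n R * clockMatrix n ξ) := by
  ext i j
  rw [Matrix.smul_apply, clockMatrix, shiftMatrix, diagonal_mul, mul_diagonal]
  simp only [of_apply, smul_eq_mul]
  split_ifs with h
  · rw [h, pow_val_add_of_pow_eq_one hξ, ← Nat.cast_one, pow_val_natCast_of_pow_eq_one hξ]
    ring
  · simp

theorem chirpMatrix_mul_clockMatrix :
    chirpMatrix n ξ * clockMatrix n ξ = clockMatrix n ξ * chirpMatrix n ξ := by
  simp only [chirpMatrix, clockMatrix, diagonal_mul_diagonal, mul_comm]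

theorem chirpMatrix_mul_shiftMatrix (hn : Odd n) (hξ : ξ ^ n = 1) :
    chirpMatrix n ξ * shiftMatrix n R = clockMatrix n ξ * shiftMatrix n R * chirpMatrix n ξ := by
  have h2 : (2 : ZMod n) * 2⁻¹ = 1 := by
    simpa using ZMod.coe_mul_inv_eq_one 2 (Nat.coprime_two_left.mpr hn)
  ext i j
  rw [chirpMatrix, clockMatrix, shiftMatrix, diagonal_mul, mul_diagonal, diagonal_mul]
  simp only [of_apply]
  split_ifs with h
  · rw [h, mul_one, mul_one, ← pow_val_add_of_pow_eq_one hξ]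
    congr 2
    linear_combination (j + 1) * h2
  · simp

theorem fourierMatrix_mul_shiftMatrix (hξ : ξ ^ n = 1) :
    fourierMatrix n ξ * shiftMatrix n R = clockMatrix n ξ * fourierMatrix n ξ := by
  ext i j
  rw [clockMatrix, diagonal_mul, mul_apply]
  simp only [fourierMatrix, shiftMatrix, of_apply, mul_ite, mul_one, mul_zero, Finset.sum_ite_eq',
    Finset.mem_univ, if_true]
  rw [← pow_val_add_of_pow_eq_one hξ]
  ring_nf

theorem fourierMatrix_mul_clockMatrix (hξ : ξ ^ n = 1) :
    fourierMatrix n ξ * clockMatrix n ξ =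
      shiftMatrix n R ^ (-1 : ZMod n).val * fourierMatrix n ξ := by
  ext i j
  rw [clockMatrix, mul_diagonal, shiftMatrix_pow, mul_apply]
  simp only [fourierMatrix, of_apply, ite_mul, one_mul, zero_mul, ZMod.natCast_zmod_val,
    ← sub_eq_add_neg, eq_sub_iff_add_eq, Finset.sum_ite_eq, Finset.mem_univ, if_true]
  rw [← pow_val_add_of_pow_eq_one hξ]
  ring_nf

theorem det_chirpMatrix_ne_zero [IsDomain R] (hξ : ξ ^ n = 1) : (chirpMatrix n ξ).det ≠ 0 := by
  have hξ₀ : ξ ≠ 0 := by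
    rintro rfl
    rw [zero_pow (NeZero.ne n)] at hξ
    exact zero_ne_one hξ
  rw [chirpMatrix, det_diagonal]
  exact Finset.prod_ne_zero_iff.mpr fun i _ => pow_ne_zero _ hξ₀

theorem det_fourierMatrix_ne_zero [IsDomain R] (hξ : IsPrimitiveRoot ξ n) :
    (fourierMatrix n ξ).det ≠ 0 := by
  obtain ⟨m, rfl⟩ := Nat.exists_eq_add_one_of_ne_zero (NeZero.ne n)
  have h : fourierMatrix (m + 1) ξ = vandermonde fun i : Fin (m + 1) => ξ ^ i.val := by
    ext i j
    exact pow_val_mul_of_pow_eq_one hξ.pow_eq_one i j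
  rw [h]
  exact det_vandermonde_ne_zero_iff.mpr fun i j hij => Fin.ext (hξ.pow_inj i.isLt j.isLt hij)

end ClockShift

section ClockShiftPSL

open Subgroup

variable {p : ℕ} [Fact p.Prime] {ξ : ℂ} {Dm Mm : SpecialLinearGroup (ZMod p) ℂ}

local notation "D̄" => projPSL p Dm
local notation "M̄" => projPSL p Mm

theorem coe_commutatorElement_clock_shift (hξ : ξ ^ p = 1)
    (hD : (Dm : Matrix (ZMod p) (ZMod p) ℂ) = clockMatrix p ξ)
    (hM : (Mm : Matrix (ZMod p) (ZMod p) ℂ) = shiftMatrix p ℂ) :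
    ((⁅Dm, Mm⁆ : SpecialLinearGroup (ZMod p) ℂ) : Matrix (ZMod p) (ZMod p) ℂ) = scalar _ ξ :=
  SpecialLinearGroup.coe_commutatorElement_of_mul_eq_smul
    (by rw [hD, hM, clockMatrix_mul_shiftMatrix hξ])

theorem commutatorElement_clock_shift_mem_center (hξ : ξ ^ p = 1)
    (hD : (Dm : Matrix (ZMod p) (ZMod p) ℂ) = clockMatrix p ξ)
    (hM : (Mm : Matrix (ZMod p) (ZMod p) ℂ) = shiftMatrix p ℂ) :
    ⁅Dm, Mm⁆ ∈ center (SpecialLinearGroup (ZMod p) ℂ) :=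
  Matrix.SpecialLinearGroup.mem_center_iff.mpr
    ⟨ξ, by rwa [ZMod.card], (coe_commutatorElement_clock_shift hξ hD hM).symm⟩

theorem orderOf_commutatorElement_clock_shift (hξ : IsPrimitiveRoot ξ p)
    (hD : (Dm : Matrix (ZMod p) (ZMod p) ℂ) = clockMatrix p ξ)
    (hM : (Mm : Matrix (ZMod p) (ZMod p) ℂ) = shiftMatrix p ℂ) :
    orderOf ⁅Dm, Mm⁆ = p := by
  rw [← orderOf_injective _ SpecialLinearGroup.coeMonoidHom_injective,
    SpecialLinearGroup.coeMonoidHom_apply, coe_commutatorElement_clock_shift hξ.pow_eq_one hD hM,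
    orderOf_scalar, hξ.eq_orderOf]

theorem commute_projPSL_clock_shift (hξ : ξ ^ p = 1)
    (hD : (Dm : Matrix (ZMod p) (ZMod p) ℂ) = clockMatrix p ξ)
    (hM : (Mm : Matrix (ZMod p) (ZMod p) ℂ) = shiftMatrix p ℂ) : Commute D̄ M̄ := by
  rw [← commutatorElement_eq_one_iff_commute, ← map_commutatorElement]
  exact (QuotientGroup.eq_one_iff _).mpr (commutatorElement_clock_shift_mem_center hξ hD hM)

theorem projPSL_clock_pow_self (hξ : ξ ^ p = 1)
    (hD : (Dm : Matrix (ZMod p) (ZMod p) ℂ) = clockMatrix p ξ) : D̄ ^ p = 1 := by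
  rw [← map_pow, show Dm ^ p = 1 from Subtype.ext (by simp [hD, clockMatrix_pow_self hξ]), map_one]

theorem projPSL_shift_pow_self
    (hM : (Mm : Matrix (ZMod p) (ZMod p) ℂ) = shiftMatrix p ℂ) : M̄ ^ p = 1 := by
  rw [← map_pow, show Mm ^ p = 1 from Subtype.ext (by simp [hM, shiftMatrix_pow_self]), map_one]

theorem exists_inducesMatrix_of_mul_eq_mul (hξ : ξ ^ p = 1)
    (hD : (Dm : Matrix (ZMod p) (ZMod p) ℂ) = clockMatrix p ξ)
    (hM : (Mm : Matrix (ZMod p) (ZMod p) ℂ) = shiftMatrix p ℂ)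
    {N : Matrix (ZMod p) (ZMod p) ℂ} (hN : N.det ≠ 0) {A : Matrix (Fin 2) (Fin 2) (ZMod p)}
    (h₀ : N * Dm = (powPair Dm Mm (A · 0) : SpecialLinearGroup (ZMod p) ℂ) * N)
    (h₁ : N * Mm = (powPair Dm Mm (A · 1) : SpecialLinearGroup (ZMod p) ℂ) * N) :
    ∃ g : PSL p, InducesMatrix D̄ M̄ g A := by
  obtain ⟨G, hG⟩ := SpecialLinearGroup.exists_forall_conj_eq hN
  refine ⟨projPSL p G, inducesMatrix_of_conj_eq (commute_projPSL_clock_shift hξ hD hM)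
    (projPSL_clock_pow_self hξ hD) (projPSL_shift_pow_self hM) ?_ ?_⟩
  · rw [← map_powPair, ← hG _ _ h₀, map_mul, map_mul, map_inv]
  · rw [← map_powPair, ← hG _ _ h₁, map_mul, map_mul, map_inv]

theorem exists_inducesMatrix_transvection_one (hodd : Odd p) (hξ : ξ ^ p = 1)
    (hD : (Dm : Matrix (ZMod p) (ZMod p) ℂ) = clockMatrix p ξ)
    (hM : (Mm : Matrix (ZMod p) (ZMod p) ℂ) = shiftMatrix p ℂ) :
    ∃ g : PSL p, InducesMatrix D̄ M̄ g (transvection 0 1 (1 : ZMod p)) := by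
  refine exists_inducesMatrix_of_mul_eq_mul hξ hD hM (det_chirpMatrix_ne_zero hξ) ?_ ?_
  · simp [powPair, ZMod.val_one, transvection, hD, chirpMatrix_mul_clockMatrix]
  · simp [powPair, ZMod.val_one, transvection, hD, hM, chirpMatrix_mul_shiftMatrix hodd hξ]

theorem exists_inducesMatrix_rotation (hξ : IsPrimitiveRoot ξ p)
    (hD : (Dm : Matrix (ZMod p) (ZMod p) ℂ) = clockMatrix p ξ)
    (hM : (Mm : Matrix (ZMod p) (ZMod p) ℂ) = shiftMatrix p ℂ) :
    ∃ g : PSL p, InducesMatrix D̄ M̄ g (!![0, 1; -1, 0] : Matrix (Fin 2) (Fin 2) (ZMod p)) := by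
  refine exists_inducesMatrix_of_mul_eq_mul hξ.pow_eq_one hD hM (det_fourierMatrix_ne_zero hξ) ?_ ?_
  · simp [powPair, hD, hM, fourierMatrix_mul_clockMatrix hξ.pow_eq_one]
  · simp [powPair, ZMod.val_one, hD, hM, fourierMatrix_mul_shiftMatrix hξ.pow_eq_one]

theorem exists_inducesMatrix_transvection (hodd : Odd p) (hξ : ξ ^ p = 1)
    (hD : (Dm : Matrix (ZMod p) (ZMod p) ℂ) = clockMatrix p ξ)
    (hM : (Mm : Matrix (ZMod p) (ZMod p) ℂ) = shiftMatrix p ℂ) (c : ZMod p) :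
    ∃ g : PSL p, InducesMatrix D̄ M̄ g (transvection 0 1 c) := by
  obtain ⟨g, hg⟩ := exists_inducesMatrix_transvection_one hodd hξ hD hM
  have hpow (k : ℕ) : InducesMatrix D̄ M̄ (g ^ k) (transvection 0 1 (k : ZMod p)) := by
    induction k with
    | zero => simpa using inducesMatrix_one
    | succ k ih =>
      rw [pow_succ, Nat.cast_succ, ← transvection_mul_transvection_same (0 : Fin 2) 1 zero_ne_one]
      exact ih.mul hg
  exact ⟨g ^ c.val, by simpa using hpow c.val⟩

theorem exists_inducesMatrix_transvection_lower (hodd : Odd p) (hξ : IsPrimitiveRoot ξ p)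
    (hD : (Dm : Matrix (ZMod p) (ZMod p) ℂ) = clockMatrix p ξ)
    (hM : (Mm : Matrix (ZMod p) (ZMod p) ℂ) = shiftMatrix p ℂ) (c : ZMod p) :
    ∃ g : PSL p, InducesMatrix D̄ M̄ g (transvection 1 0 c) := by
  -- the rotation `ρ` conjugates `transvection 0 1 (-c)` into `transvection 1 0 c`, and `ρ⁻¹ = ρ³`
  obtain ⟨w, hw⟩ := exists_inducesMatrix_rotation hξ hD hM
  obtain ⟨t, ht⟩ := exists_inducesMatrix_transvection hodd hξ.pow_eq_one hD hM (-c)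
  have h : transvection 1 0 c = !![0, 1; -1, 0] * !![0, 1; -1, 0] * !![0, 1; -1, 0] *
      transvection 0 1 (-c) * !![0, 1; -1, 0] := by
    rw [← Matrix.ext_iff]
    simp [transvection, Fin.forall_fin_two, one_fin_two, single, vecHead, vecTail]
  exact ⟨w * w * w * t * w, h ▸ (((hw.mul hw).mul hw).mul ht).mul hw⟩

theorem exists_inducesMatrix (hodd : Odd p) (hξ : IsPrimitiveRoot ξ p)
    (hD : (Dm : Matrix (ZMod p) (ZMod p) ℂ) = clockMatrix p ξ)
    (hM : (Mm : Matrix (ZMod p) (ZMod p) ℂ) = shiftMatrix p ℂ)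
    (A : SpecialLinearGroup (Fin 2) (ZMod p)) :
    ∃ g : PSL p, InducesMatrix D̄ M̄ g (A : Matrix (Fin 2) (Fin 2) (ZMod p)) := by
  induction A using SL2.transvection_induction with
  | hmul A B hA hB =>
    obtain ⟨g, hg⟩ := hA
    obtain ⟨h, hh⟩ := hB
    exact ⟨g * h, hg.mul hh⟩
  | htransvec i j hij c =>
    fin_cases i <;> fin_cases j
    · exact absurd rfl hij
    · exact exists_inducesMatrix_transvection hodd hξ.pow_eq_one hD hM c
    · exact exists_inducesMatrix_transvection_lower hodd hξ hD hM c
    · exact absurd rfl hij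

theorem det_eq_one_of_conj_eq (hξ : IsPrimitiveRoot ξ p)
    (hD : (Dm : Matrix (ZMod p) (ZMod p) ℂ) = clockMatrix p ξ)
    (hM : (Mm : Matrix (ZMod p) (ZMod p) ℂ) = shiftMatrix p ℂ) {g : PSL p} {a b c d : ZMod p}
    (h₀ : g * D̄ * g⁻¹ = D̄ ^ a.val * M̄ ^ c.val)
    (h₁ : g * M̄ * g⁻¹ = D̄ ^ b.val * M̄ ^ d.val) :
    a * d - b * c = 1 := by
  obtain ⟨G, rfl⟩ := QuotientGroup.mk'_surjective _ g
  have hz := commutatorElement_clock_shift_mem_center hξ.pow_eq_one hD hM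
  have h₀' : ((G * Dm * G⁻¹ : SpecialLinearGroup (ZMod p) ℂ) : PSL p) =
      ((Dm ^ a.val * Mm ^ c.val : SpecialLinearGroup (ZMod p) ℂ) : PSL p) := by simpa using h₀
  have h₁' : ((G * Mm * G⁻¹ : SpecialLinearGroup (ZMod p) ℂ) : PSL p) =
      ((Dm ^ b.val * Mm ^ d.val : SpecialLinearGroup (ZMod p) ℂ) : PSL p) := by simpa using h₁
  have key : ⁅Dm ^ a.val * Mm ^ c.val, Dm ^ b.val * Mm ^ d.val⁆ = ⁅Dm, Mm⁆ ^ (1 : ℤ) := by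
    rw [← commutatorElement_eq_of_mk_eq le_rfl h₀' h₁',
      ← conjugate_commutatorElement, mem_center_iff.mp hz G, mul_inv_cancel_right, zpow_one]
  rw [commutatorElement_pow_mul_pow hz, zpow_eq_zpow_iff_modEq,
    orderOf_commutatorElement_clock_shift hξ hD hM, ← ZMod.intCast_eq_intCast_iff] at key
  push_cast [ZMod.natCast_zmod_val] at key
  linear_combination key

end ClockShiftPSL

/-- **Lemma 5.4.** Let `p` be an odd prime.  Identify
`Aut(⟨D̄(ξ)⟩ × ⟨M̄_c⟩) ≅ GL(2, ℤ/p)` via the basis `(D̄(ξ), M̄_c)`.  An automorphism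
`[[a,b],[c,d]]` (sending `D̄(ξ) ↦ D̄(ξ)ᵃ M̄_c ᶜ` and `M̄_c ↦ D̄(ξ)ᵇ M̄_c ᵈ`) is induced by
conjugation by an element of the normalizer of `⟨D̄(ξ)⟩ × ⟨M̄_c⟩` in `PSL(p,ℂ)` if and
only if it lies in `SL(2, ℤ/p)`, i.e. `ad − bc = 1`. -/
theorem realized_automorphisms_are_SL2 (p : ℕ) [Fact p.Prime] (hodd : Odd p)
    (ξ : ℂ) (hξ : IsPrimitiveRoot ξ p)
    (Dm Mm : Matrix.SpecialLinearGroup (ZMod p) ℂ)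
    (hD : (Dm : Matrix (ZMod p) (ZMod p) ℂ) = Matrix.diagonal fun i : ZMod p => ξ ^ i.val)
    (hM : (Mm : Matrix (ZMod p) (ZMod p) ℂ) =
      Matrix.of fun i j : ZMod p => if i = j + 1 then (1 : ℂ) else 0)
    (a b c d : ZMod p) :
    (∃ g : PSL p,
        g * projPSL p Dm * g⁻¹ = (projPSL p Dm) ^ a.val * (projPSL p Mm) ^ c.val ∧
        g * projPSL p Mm * g⁻¹ = (projPSL p Dm) ^ b.val * (projPSL p Mm) ^ d.val) ↔
      a * d - b * c = 1 := by
  refine ⟨fun ⟨g, h₀, h₁⟩ => det_eq_one_of_conj_eq hξ hD hM h₀ h₁, fun h => ?_⟩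
  obtain ⟨g, hg⟩ :=
    exists_inducesMatrix hodd hξ hD hM ⟨!![a, b; c, d], by simpa [det_fin_two] using h⟩
  exact ⟨g, by simpa using hg.conj_eq⟩
end
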